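/- For all complex x, y with |x| < 1/(1−q) and |y| < 1/(1−q), the series ∑_{n=0}^∞ (x ⊕_q y)^{2n+1}/[2n+1]_q! converges absolutely and equals cosh_q(x) sinh_q(y) + sinh_q(x) cosh_q(y). -/

import Mathlib

open Finset Filter

/-- The q-number `[n]_q = (1 - q^n)/(1 - q)`. -/
noncomputable def qNum (q : ℝ) (n : ℕ) : ℝ := (1 - q ^ n) / (1 - q)

/-- The q-factorial `[n]_q! = ∏_{k=1}^n [k]_q`. -/
noncomputable def qFact (q : ℝ) (n : ℕ) : ℝ := ∏ k ∈ Finset.range n, qNum q (k + 1)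

/-- The q-binomial coefficient `[n choose k]_q`. -/
noncomputable def qBinom (q : ℝ) (n k : ℕ) : ℝ := qFact q n / (qFact q k * qFact q (n - k))

/-- The Ward q-addition power `(x ⊕_q y)^n = ∑_{k=0}^n [n choose k]_q x^k y^(n-k)`. -/
noncomputable def wardPow (q : ℝ) (x y : ℂ) (n : ℕ) : ℂ :=
  ∑ k ∈ Finset.range (n + 1), (qBinom q n k : ℂ) * x ^ k * y ^ (n - k)

/-- The q-hyperbolic cosine `cosh_q(z) = ∑ z^(2n)/[2n]_q!`. -/
noncomputable def qCosh (q : ℝ) (z : ℂ) : ℂ := ∑' n : ℕ, z ^ (2 * n) / (qFact q (2 * n) : ℂ)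

/-- The q-hyperbolic sine `sinh_q(z) = ∑ z^(2n+1)/[2n+1]_q!`. -/
noncomputable def qSinh (q : ℝ) (z : ℂ) : ℂ :=
  ∑' n : ℕ, z ^ (2 * n + 1) / (qFact q (2 * n + 1) : ℂ)

/-!
With `e_q(z) = ∑ z^n/[n]_q!`, the term `(x ⊕_q y)^n/[n]_q!` is exactly the `n`-th coefficient of
the Cauchy product of the series of `e_q(x)` and `e_q(y)`; both converge absolutely by the ratio
test since `[n]_q → 1/(1 - q)`, so `e_q(x) e_q(y) = ∑ (x ⊕_q y)^n/[n]_q!`.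
Now `(-x ⊕_q -y)^n = (-1)^n (x ⊕_q y)^n`, and `e_q = cosh_q + sinh_q` with `cosh_q` even and
`sinh_q` odd: subtracting the identity at `(-x, -y)` from the one at `(x, y)` leaves twice the
odd terms on the right and `2 (cosh_q x sinh_q y + sinh_q x cosh_q y)` on the left.
-/

open Filter Topology

noncomputable def qExp (q : ℝ) (z : ℂ) : ℂ := ∑' n : ℕ, z ^ n / (qFact q n : ℂ)

lemma qNum_succ_pos {q : ℝ} (hq0 : 0 ≤ q) (hq1 : q < 1) (n : ℕ) : 0 < qNum q (n + 1) :=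
  div_pos (sub_pos.2 (pow_lt_one₀ hq0 hq1 n.succ_ne_zero)) (sub_pos.2 hq1)

lemma qFact_pos {q : ℝ} (hq0 : 0 ≤ q) (hq1 : q < 1) (n : ℕ) : 0 < qFact q n :=
  prod_pos fun k _ => qNum_succ_pos hq0 hq1 k

lemma qFact_succ (q : ℝ) (n : ℕ) : qFact q (n + 1) = qFact q n * qNum q (n + 1) :=
  prod_range_succ _ _

lemma tendsto_qNum {q : ℝ} (hq0 : 0 ≤ q) (hq1 : q < 1) :
    Tendsto (qNum q) atTop (𝓝 (1 / (1 - q))) := by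
  have := ((tendsto_pow_atTop_nhds_zero_of_lt_one hq0 hq1).const_sub 1).div_const (1 - q)
  rwa [sub_zero] at this

lemma norm_pow_div_qFact_succ {q : ℝ} (hq0 : 0 ≤ q) (hq1 : q < 1) (z : ℂ) (n : ℕ) :
    ‖z ^ (n + 1) / (qFact q (n + 1) : ℂ)‖ =
      ‖z‖ / qNum q (n + 1) * ‖z ^ n / (qFact q n : ℂ)‖ := by
  rw [qFact_succ, pow_succ', Complex.ofReal_mul, mul_comm (qFact q n : ℂ), mul_div_mul_comm,
    norm_mul, norm_div, Complex.norm_real, Real.norm_of_nonneg (qNum_succ_pos hq0 hq1 n).le]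

lemma summable_norm_pow_div_qFact {q : ℝ} (hq0 : 0 ≤ q) (hq1 : q < 1) {z : ℂ}
    (hz : ‖z‖ < 1 / (1 - q)) : Summable fun n => ‖z ^ n / (qFact q n : ℂ)‖ := by
  have hratio : Tendsto (fun n => ‖z‖ / qNum q (n + 1)) atTop (𝓝 (‖z‖ * (1 - q))) := by
    have := (tendsto_const_nhds (x := ‖z‖)).div
      ((tendsto_qNum hq0 hq1).comp (tendsto_add_atTop_nat 1)) (one_div_ne_zero (sub_pos.2 hq1).ne')
    rwa [one_div, div_inv_eq_mul] at this
  have hlt : ‖z‖ * (1 - q) < 1 := by rwa [lt_div_iff₀ (sub_pos.2 hq1)] at hz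
  obtain ⟨r, hr, hr1⟩ := exists_between hlt
  refine summable_of_ratio_norm_eventually_le hr1 ?_
  filter_upwards [hratio.eventually_le_const hr] with n hn
  rw [norm_norm, norm_norm, norm_pow_div_qFact_succ hq0 hq1]
  exact mul_le_mul_of_nonneg_right hn (norm_nonneg _)

lemma wardPow_div_qFact {q : ℝ} (hq0 : 0 ≤ q) (hq1 : q < 1) (x y : ℂ) (n : ℕ) :
    wardPow q x y n / (qFact q n : ℂ) =
      ∑ k ∈ range (n + 1),
        x ^ k / (qFact q k : ℂ) * (y ^ (n - k) / (qFact q (n - k) : ℂ)) := by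
  have hne : ∀ m, (qFact q m : ℂ) ≠ 0 := fun m =>
    Complex.ofReal_ne_zero.2 (qFact_pos hq0 hq1 m).ne'
  rw [wardPow, sum_div]
  refine sum_congr rfl fun k _ => ?_
  have := hne k; have := hne (n - k); have := hne n
  simp only [qBinom]
  push_cast
  field_simp

lemma wardPow_neg (q : ℝ) (x y : ℂ) (n : ℕ) :
    wardPow q (-x) (-y) n = (-1) ^ n * wardPow q x y n := by
  rw [wardPow, wardPow, mul_sum]
  refine sum_congr rfl fun k hk => ?_
  have hkn : k + (n - k) = n := Nat.add_sub_cancel' (Nat.lt_succ_iff.1 (mem_range.1 hk))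
  rw [neg_pow x, neg_pow y, ← hkn, pow_add, hkn]
  ring

lemma summable_norm_wardPow_div_qFact {q : ℝ} (hq0 : 0 ≤ q) (hq1 : q < 1) {x y : ℂ}
    (hx : ‖x‖ < 1 / (1 - q)) (hy : ‖y‖ < 1 / (1 - q)) :
    Summable fun n => ‖wardPow q x y n / (qFact q n : ℂ)‖ := by
  simpa only [wardPow_div_qFact hq0 hq1] using summable_norm_sum_mul_range_of_summable_norm
    (summable_norm_pow_div_qFact hq0 hq1 hx) (summable_norm_pow_div_qFact hq0 hq1 hy)

lemma qExp_mul_qExp {q : ℝ} (hq0 : 0 ≤ q) (hq1 : q < 1) {x y : ℂ}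
    (hx : ‖x‖ < 1 / (1 - q)) (hy : ‖y‖ < 1 / (1 - q)) :
    qExp q x * qExp q y = ∑' n, wardPow q x y n / (qFact q n : ℂ) := by
  rw [qExp, qExp]
  simpa only [wardPow_div_qFact hq0 hq1] using tsum_mul_tsum_eq_tsum_sum_range_of_summable_norm
    (summable_norm_pow_div_qFact hq0 hq1 hx) (summable_norm_pow_div_qFact hq0 hq1 hy)

lemma summable_even_odd_of_summable {R : Type*} [NormedAddCommGroup R] [CompleteSpace R]
    {f : ℕ → R} (hf : Summable f) :
    (Summable fun k => f (2 * k)) ∧ Summable fun k => f (2 * k + 1) :=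
  ⟨hf.comp_injective fun a b h => by simpa using h,
    hf.comp_injective fun a b h => by simpa using h⟩

lemma tsum_neg_one_pow_mul {R : Type*} [Ring R] [TopologicalSpace R] [IsTopologicalRing R]
    [T2Space R] {f : ℕ → R} (he : Summable fun k => f (2 * k))
    (ho : Summable fun k => f (2 * k + 1)) :
    ∑' n, (-1) ^ n * f n = ∑' k, f (2 * k) - ∑' k, f (2 * k + 1) := by
  have heven (k : ℕ) : (-1 : R) ^ (2 * k) * f (2 * k) = f (2 * k) := by simp [pow_mul]
  have hodd (k : ℕ) : (-1 : R) ^ (2 * k + 1) * f (2 * k + 1) = -f (2 * k + 1) := by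
    simp [pow_succ, pow_mul]
  rw [← tsum_even_add_odd (by simpa only [heven] using he) (by simpa only [hodd] using ho.neg)]
  simp only [heven, hodd, tsum_neg, sub_eq_add_neg]

lemma qExp_eq_qCosh_add_qSinh {q : ℝ} (hq0 : 0 ≤ q) (hq1 : q < 1) {z : ℂ}
    (hz : ‖z‖ < 1 / (1 - q)) : qExp q z = qCosh q z + qSinh q z := by
  obtain ⟨he, ho⟩ :=
    summable_even_odd_of_summable (summable_norm_pow_div_qFact hq0 hq1 hz).of_norm
  exact (tsum_even_add_odd (f := fun n => z ^ n / (qFact q n : ℂ)) he ho).symm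

lemma qCosh_neg (q : ℝ) (z : ℂ) : qCosh q (-z) = qCosh q z := by
  simp only [qCosh, Even.neg_pow (even_two_mul _)]

lemma qSinh_neg (q : ℝ) (z : ℂ) : qSinh q (-z) = -qSinh q z := by
  simp only [qSinh, Odd.neg_pow (odd_two_mul_add_one _), neg_div, tsum_neg]

lemma qExp_neg_eq_qCosh_sub_qSinh {q : ℝ} (hq0 : 0 ≤ q) (hq1 : q < 1) {z : ℂ}
    (hz : ‖z‖ < 1 / (1 - q)) : qExp q (-z) = qCosh q z - qSinh q z := by
  rw [qExp_eq_qCosh_add_qSinh hq0 hq1 (by rwa [norm_neg]), qCosh_neg, qSinh_neg, sub_eq_add_neg]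

theorem stmt_4 (q : ℝ) (hq0 : 0 < q) (hq1 : q < 1) (x y : ℂ)
    (hx : ‖x‖ < 1 / (1 - q)) (hy : ‖y‖ < 1 / (1 - q)) :
    Summable (fun n : ℕ => ‖wardPow q x y (2 * n + 1) / (qFact q (2 * n + 1) : ℂ)‖) ∧
      ∑' n : ℕ, wardPow q x y (2 * n + 1) / (qFact q (2 * n + 1) : ℂ) =
        qCosh q x * qSinh q y + qSinh q x * qCosh q y := by
  have hw := summable_norm_wardPow_div_qFact hq0.le hq1 hx hy
  refine ⟨(summable_even_odd_of_summable hw).2, ?_⟩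
  obtain ⟨he, ho⟩ := summable_even_odd_of_summable hw.of_norm
  have hsum := qExp_mul_qExp hq0.le hq1 hx hy
  have hdiff := qExp_mul_qExp hq0.le hq1 (x := -x) (y := -y)
    (by rwa [norm_neg]) (by rwa [norm_neg])
  rw [← tsum_even_add_odd (f := fun n => wardPow q x y n / (qFact q n : ℂ)) he ho,
    qExp_eq_qCosh_add_qSinh hq0.le hq1 hx, qExp_eq_qCosh_add_qSinh hq0.le hq1 hy] at hsum
  simp only [wardPow_neg, mul_div_assoc] at hdiff
  rw [tsum_neg_one_pow_mul (f := fun n => wardPow q x y n / (qFact q n : ℂ)) he ho,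
    qExp_neg_eq_qCosh_sub_qSinh hq0.le hq1 hx, qExp_neg_eq_qCosh_sub_qSinh hq0.le hq1 hy] at hdiff
  linear_combination (hdiff - hsum) / 2
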